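/- Leslie stress dissipation identity (equation (cs2)): Let n = 2 or 3, and let u, d, ḋ : ℝⁿ → ℝⁿ be smooth vector fields with sufficient decay so that all the integrals below converge, with |d| = 1. Set A = (∇u + (∇u)ᵀ)/2, B = (∇u − (∇u)ᵀ)/2, and let Σ₃ = σ̃(u, d, ḋ) with (σ̃(u,d,ḋ))_{ij} = μ₁ d_k d_l A_{kl} d_i d_j + μ₂ d_i(ḋ_j + B_{jk}d_k) + μ₃ d_j(ḋ_i + B_{ik}d_k) + μ₅ d_i A_{jk}d_k + μ₆ d_j A_{ik}d_k. Assume the Leslie coefficients satisfy λ₁ = μ₂ − μ₃ ≠ 0, λ₂ = μ₅ − μ₆ and μ₂ + μ₃ = μ₆ − μ₅ (Parodi's relation). Then: ⟨div Σ₃, u⟩ + λ₁‖ḋ‖²_{L²} + λ₁⟨ḋ, Bd⟩ + λ₂⟨ḋ, Ad⟩ = −μ₁‖dᵀAd‖²_{L²} + λ₁‖ḋ + Bd + (λ₂/λ₁)Ad‖²_{L²} − (μ₅ + μ₆ + λ₂²/λ₁)‖Ad‖²_{L²}. -/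

import Mathlib

open MeasureTheory Real Filter Topology

noncomputable section

namespace EL

/-- scalar fields on ℝⁿ -/
abbrev SF (n : ℕ) := (Fin n → ℝ) → ℝ
/-- vector fields on ℝⁿ -/
abbrev VF (n : ℕ) := (Fin n → ℝ) → Fin n → ℝ
/-- matrix fields on ℝⁿ -/
abbrev MF (n : ℕ) := (Fin n → ℝ) → Fin n → Fin n → ℝ
/-- time dependent scalar fields -/
abbrev TSF (n : ℕ) := ℝ → SF n
/-- time dependent vector fields -/
abbrev TVF (n : ℕ) := ℝ → VF n

variable {n : ℕ}

/-- spatial partial derivative ∂ᵢ -/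
def pd (i : Fin n) (f : SF n) : SF n := fun x => fderiv ℝ f x (Pi.single i 1)

/-- iterated partial derivative ∂ᵢᵏ -/
def pdPow (i : Fin n) : ℕ → SF n → SF n
  | 0 => id
  | k + 1 => fun f => pd i (pdPow i k f)

/-- multi-index spatial derivative ∂^m -/
def pdM (m : Fin n → ℕ) (f : SF n) : SF n :=
  (List.finRange n).foldr (fun i g => pdPow i (m i) g) f

/-- multi-indices m with |m| ≤ s -/
def degLe (n s : ℕ) : Finset (Fin n → ℕ) :=
  (Fintype.piFinset fun _ : Fin n => Finset.range (s + 1)).filter fun m => ∑ i, m i ≤ s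

/-- multi-indices m with 1 ≤ |m| ≤ s -/
def degBetween (n s : ℕ) : Finset (Fin n → ℕ) :=
  (Fintype.piFinset fun _ : Fin n => Finset.range (s + 1)).filter fun m =>
    1 ≤ ∑ i, m i ∧ ∑ i, m i ≤ s

/-- squared weighted Sobolev norm ‖f‖²_{H^s_w} -/
def sobW (s : ℕ) (w f : SF n) : ℝ := ∑ m ∈ degLe n s, ∫ x, w x * (pdM m f x) ^ 2
/-- squared Sobolev norm ‖f‖²_{H^s} -/
def sob (s : ℕ) (f : SF n) : ℝ := sobW s (fun _ => 1) f
/-- squared weighted homogeneous Sobolev norm ‖f‖²_{Ḣ^s_w} -/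
def sobDotW (s : ℕ) (w f : SF n) : ℝ := ∑ m ∈ degBetween n s, ∫ x, w x * (pdM m f x) ^ 2
/-- squared homogeneous Sobolev norm ‖f‖²_{Ḣ^s} -/
def sobDot (s : ℕ) (f : SF n) : ℝ := sobDotW s (fun _ => 1) f

def sobWv (s : ℕ) (w : SF n) (u : VF n) : ℝ := ∑ i, sobW s w fun x => u x i
def sobv (s : ℕ) (u : VF n) : ℝ := ∑ i, sob s fun x => u x i
def sobDotWv (s : ℕ) (w : SF n) (u : VF n) : ℝ := ∑ i, sobDotW s w fun x => u x i
def sobDotv (s : ℕ) (u : VF n) : ℝ := ∑ i, sobDot s fun x => u x i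

def L2sq (f : SF n) : ℝ := ∫ x, (f x) ^ 2
def L2sqv (u : VF n) : ℝ := ∫ x, ∑ i, (u x i) ^ 2
def l2norm (f : SF n) : ℝ := Real.sqrt (L2sq f)
def l2normv (u : VF n) : ℝ := Real.sqrt (L2sqv u)
def hNorm (s : ℕ) (f : SF n) : ℝ := Real.sqrt (sob s f)
def hNormv (s : ℕ) (u : VF n) : ℝ := Real.sqrt (sobv s u)
def hDotNorm (s : ℕ) (f : SF n) : ℝ := Real.sqrt (sobDot s f)
def hDotNormv (s : ℕ) (u : VF n) : ℝ := Real.sqrt (sobDotv s u)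

/-- L^∞ norm -/
def Linf (f : SF n) : ℝ := (eLpNorm f ⊤ volume).toReal

def intg (f : SF n) : ℝ := ∫ x, f x
def ip (f g : SF n) : ℝ := ∫ x, f x * g x
def ipv (u v : VF n) : ℝ := ∫ x, ∑ i, u x i * v x i

def MemSobW (s : ℕ) (w f : SF n) : Prop :=
  ∀ m ∈ degLe n s, Integrable (fun x => w x * (pdM m f x) ^ 2) volume
def MemSobWv (s : ℕ) (w : SF n) (u : VF n) : Prop := ∀ i, MemSobW s w fun x => u x i
def MemSob (s : ℕ) (f : SF n) : Prop := MemSobW s (fun _ => 1) f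
def MemSobv (s : ℕ) (u : VF n) : Prop := ∀ i, MemSob s fun x => u x i

/-- divergence of a vector field -/
def diverg (u : VF n) : SF n := fun x => ∑ i, pd i (fun y => u y i) x
def grad (f : SF n) : VF n := fun x i => pd i f x
def lap (f : SF n) : SF n := fun x => ∑ i, pd i (pd i f) x
def lapv (d : VF n) : VF n := fun x i => lap (fun y => d y i) x
/-- u·∇f -/
def conv (u : VF n) (f : SF n) : SF n := fun x => ∑ i, u x i * pd i f x
/-- u·∇d componentwise -/
def convV (u d : VF n) : VF n := fun x i => conv u (fun y => d y i) x
/-- divergence of a matrix field, (div M)_i = ∑_j ∂_j M_{ij} -/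
def divMat (M : MF n) : VF n := fun x i => ∑ j, pd j (fun y => M y i j) x

/-- velocity gradient (∇u)_{ij} = ∂_j u_i -/
def Dmat (u : VF n) : MF n := fun x i j => pd j (fun y => u y i) x
/-- rate of strain A = (∇u + ∇uᵀ)/2 -/
def Amat (u : VF n) : MF n := fun x i j => (Dmat u x i j + Dmat u x j i) / 2
/-- skew part B = (∇u − ∇uᵀ)/2 -/
def Bmat (u : VF n) : MF n := fun x i j => (Dmat u x i j - Dmat u x j i) / 2
def mvec (M : MF n) (d : VF n) : VF n := fun x i => ∑ j, M x i j * d x j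
def quadForm (M : MF n) (d : VF n) : SF n := fun x => ∑ i, ∑ j, d x i * M x i j * d x j
def normSq (d : VF n) : SF n := fun x => ∑ i, (d x i) ^ 2
/-- |∇d|² -/
def gradNormSq (d : VF n) : SF n := fun x => ∑ i, ∑ j, (Dmat d x i j) ^ 2
/-- (∇d ⊙ ∇d)_{ij} = ∂_i d · ∂_j d -/
def odotMat (d : VF n) : MF n := fun x i j => ∑ k, Dmat d x k i * Dmat d x k j
def kron (i j : Fin n) : ℝ := if i = j then 1 else 0

/-- ‖∇u‖²_{H^s} -/
def sobGradv (s : ℕ) (u : VF n) : ℝ := ∑ i, ∑ j, sob s fun x => Dmat u x i j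
def gradHNormv (s : ℕ) (u : VF n) : ℝ := Real.sqrt (sobGradv s u)
/-- ‖∇u‖²_{Ḣ^s} -/
def sobDotGradv (s : ℕ) (u : VF n) : ℝ := ∑ i, ∑ j, sobDot s fun x => Dmat u x i j
def gradHDotNormv (s : ℕ) (u : VF n) : ℝ := Real.sqrt (sobDotGradv s u)
/-- ‖∇φ‖²_{H^s_w} -/
def gradSobWv (s : ℕ) (w : SF n) (f : SF n) : ℝ := ∑ i, sobW s w (pd i f)
/-- ‖∇d‖²_{Ḣ^s_w} for a vector field d -/
def gradSobDotWm (s : ℕ) (w : SF n) (d : VF n) : ℝ := ∑ i, ∑ j, sobDotW s w fun x => Dmat d x i j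

/-- local (ball of radius R) squared Sobolev norm -/
def sobLocSq (s : ℕ) (R : ℝ) (f : SF n) : ℝ :=
  ∑ m ∈ degLe n s, ∫ x in Metric.closedBall (0 : Fin n → ℝ) R, (pdM m f x) ^ 2

/-- time derivative of a time-dependent scalar field -/
def dtS (f : TSF n) : TSF n := fun t x => deriv (fun τ => f τ x) t
/-- time derivative of a time-dependent vector field -/
def dtV (u : TVF n) : TVF n := fun t x i => deriv (fun τ => u τ x i) t
/-- material derivative ḋ = ∂_t d + u·∇d -/
def matD (u d : TVF n) : TVF n := fun t x i => dtV d t x i + convV (u t) (d t) x i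

def SmoothS (f : TSF n) : Prop := ContDiff ℝ (⊤ : ℕ∞) fun p : ℝ × (Fin n → ℝ) => f p.1 p.2
def SmoothV (u : TVF n) : Prop := ∀ i, ContDiff ℝ (⊤ : ℕ∞) fun p : ℝ × (Fin n → ℝ) => u p.1 p.2 i

/-- pressure p(ρ) = a ρ^γ -/
def pP (a g r : ℝ) : ℝ := a * r ^ g
/-- p′(ρ) = a γ ρ^(γ−1) -/
def pP' (a g r : ℝ) : ℝ := a * g * r ^ (g - 1)
/-- p″(ρ) = a γ (γ−1) ρ^(γ−2) -/
def pP'' (a g r : ℝ) : ℝ := a * g * (g - 1) * r ^ (g - 2)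

/-- relative pressure entropy Π = (a/(ε²(γ−1)))[ρ^γ − γ(ρ−1) − 1] -/
def PiEnt (a g ε : ℝ) (ρ : SF n) : SF n :=
  fun x => (a / (ε ^ 2 * (g - 1))) * ((ρ x) ^ g - g * (ρ x - 1) - 1)

/-- the physical coefficients of the Ericksen–Leslie system -/
structure Coeffs where
  aP : ℝ
  gam : ℝ
  kap : ℝ
  mu1 : ℝ
  mu2 : ℝ
  mu3 : ℝ
  mu4 : ℝ
  mu5 : ℝ
  mu6 : ℝ
  xi : ℝ
  lam1 : ℝ
  lam2 : ℝ

/-- the standing hypotheses on the coefficients -/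
def Coeffs.good (c : Coeffs) : Prop :=
  0 < c.aP ∧ 1 < c.gam ∧
  c.lam1 = c.mu2 - c.mu3 ∧ c.lam2 = c.mu5 - c.mu6 ∧ c.mu2 + c.mu3 = c.mu6 - c.mu5 ∧
  0 < c.kap ∧ 0 ≤ c.mu1 ∧ 0 < c.mu4 ∧ 0 ≤ c.mu4 / 2 + c.xi ∧
  c.lam1 < 0 ∧ 0 ≤ c.mu5 + c.mu6 + c.lam2 ^ 2 / c.lam1

/-- ρ = 1 + εφ -/
def rhoF (ε : ℝ) (φ : SF n) : SF n := fun x => 1 + ε * φ x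

/-- viscous stress Σ₁ -/
def Sigma1 (mu4 xi : ℝ) (u : VF n) : MF n :=
  fun x i j => (mu4 / 2) * (Dmat u x i j + Dmat u x j i) + xi * diverg u x * kron i j

/-- Ericksen elastic stress Σ₂ -/
def Sigma2 (kap : ℝ) (d : VF n) : MF n :=
  fun x i j => (kap / 2) * gradNormSq d x * kron i j - kap * odotMat d x i j

/-- Leslie stress σ̃(u,d,ḋ) -/
def leslie (mu1 mu2 mu3 mu5 mu6 : ℝ) (u d dd : VF n) : MF n :=
  fun x i j =>
    mu1 * quadForm (Amat u) d x * d x i * d x j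
    + mu2 * d x i * (dd x j + mvec (Bmat u) d x j)
    + mu3 * d x j * (dd x i + mvec (Bmat u) d x i)
    + mu5 * d x i * mvec (Amat u) d x j
    + mu6 * d x j * mvec (Amat u) d x i

def leslieC (c : Coeffs) (u d dd : VF n) : MF n := leslie c.mu1 c.mu2 c.mu3 c.mu5 c.mu6 u d dd

/-- total stress Σ₁ + Σ₂ + Σ₃ -/
def SigmaAll (c : Coeffs) (u d dd : VF n) : MF n :=
  fun x i j => Sigma1 c.mu4 c.xi u x i j + Sigma2 c.kap d x i j + leslieC c u d dd x i j

/-- Lagrange multiplier Γ^ε = −ρ|ḋ|² + κ|∇d|² − λ₂ dᵀAd -/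
def GammaC (kap lam2 : ℝ) (ρ : SF n) (u d dd : VF n) : SF n :=
  fun x => - ρ x * normSq dd x + kap * gradNormSq d x - lam2 * quadForm (Amat u) d x

/-- incompressible Lagrange multiplier Γ = −|ḋ|² + κ|∇d|² − λ₂ dᵀAd -/
def GammaI (kap lam2 : ℝ) (u d dd : VF n) : SF n :=
  fun x => - normSq dd x + kap * gradNormSq d x - lam2 * quadForm (Amat u) d x

/-- the compressible Ericksen–Leslie hyperbolic system (csys), satisfied for t in S -/
def IsCsysOn (c : Coeffs) (ε : ℝ) (φ : TSF n) (u d : TVF n) (S : Set ℝ) : Prop :=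
  ∀ t ∈ S, ∀ x,
    (dtS φ t x + conv (u t) (φ t) x + φ t x * diverg (u t) x
        + (1 / ε) * diverg (u t) x = 0)
    ∧ (∀ i,
        dtV u t x i + convV (u t) (u t) x i
          + (1 / ε) * (pP' c.aP c.gam (rhoF ε (φ t) x) / rhoF ε (φ t) x) * pd i (φ t) x
        = (1 / rhoF ε (φ t) x) * divMat (SigmaAll c (u t) (d t) (matD u d t)) x i)
    ∧ (∀ i,
        matD u (matD u d) t x i
        = c.kap * (1 / rhoF ε (φ t) x) * lapv (d t) x i
          + (1 / rhoF ε (φ t) x)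
              * GammaC c.kap c.lam2 (rhoF ε (φ t)) (u t) (d t) (matD u d t) x * d t x i
          + c.lam1 * (1 / rhoF ε (φ t) x) * (matD u d t x i + mvec (Bmat (u t)) (d t) x i)
          + c.lam2 * (1 / rhoF ε (φ t) x) * mvec (Amat (u t)) (d t) x i)
    ∧ normSq (d t) x = 1

/-- the incompressible Ericksen–Leslie hyperbolic system (isys), satisfied for t in S -/
def IsIsysOn (c : Coeffs) (u : TVF n) (pr : TSF n) (d : TVF n) (S : Set ℝ) : Prop :=
  ∀ t ∈ S, ∀ x,
    diverg (u t) x = 0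
    ∧ (∀ i,
        dtV u t x i + convV (u t) (u t) x i - (c.mu4 / 2) * lapv (u t) x i + pd i (pr t) x
        = - c.kap * divMat (odotMat (d t)) x i
          + divMat (leslieC c (u t) (d t) (matD u d t)) x i)
    ∧ (∀ i,
        matD u (matD u d) t x i
        = c.kap * lapv (d t) x i
          + GammaI c.kap c.lam2 (u t) (d t) (matD u d t) x * d t x i
          + c.lam1 * (matD u d t x i + mvec (Bmat (u t)) (d t) x i)
          + c.lam2 * mvec (Amat (u t)) (d t) x i)
    ∧ normSq (d t) x = 1

/-- the energy functional E_s(φ, u, d) -/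
def Es (c : Coeffs) (ε : ℝ) (s : ℕ) (φ : TSF n) (u d : TVF n) (t : ℝ) : ℝ :=
  sobW s (fun x => pP' c.aP c.gam (rhoF ε (φ t) x)) (φ t)
  + sobWv s (rhoF ε (φ t)) (u t)
  + sobWv s (rhoF ε (φ t)) (matD u d t)
  + c.kap * sobGradv s (d t)

/-- the initial energy -/
def dataE (c : Coeffs) (ε : ℝ) (s : ℕ) (φ₀ : SF n) (u₀ dt₀ d₀ : VF n) : ℝ :=
  sobW s (fun x => pP' c.aP c.gam (rhoF ε φ₀ x)) φ₀
  + sobWv s (rhoF ε φ₀) u₀ + sobWv s (rhoF ε φ₀) dt₀ + c.kap * sobGradv s d₀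

/-- the energy dissipation rate functional D_s(u, d) -/
def Ds (c : Coeffs) (s : ℕ) (u d dd : VF n) : ℝ :=
  (c.mu4 / 2) * sobGradv s u + (c.mu4 / 2 + c.xi) * sob s (diverg u)
  + c.mu1 * (∑ m ∈ degLe n s,
      L2sq fun x => ∑ i, ∑ j, d x i * pdM m (fun y => Amat u y i j) x * d x j)
  - c.lam1 * (∑ m ∈ degLe n s,
      L2sqv fun x k =>
        pdM m (fun y => dd y k) x
          + (∑ j, pdM m (fun y => Bmat u y k j) x * d x j)
          + (c.lam2 / c.lam1) * ∑ j, pdM m (fun y => Amat u y k j) x * d x j)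
  + (c.mu5 + c.mu6 + c.lam2 ^ 2 / c.lam1) * (∑ m ∈ degLe n s,
      L2sqv fun x k => ∑ j, pdM m (fun y => Amat u y k j) x * d x j)

/-- the functional A_s -/
def As (s : ℕ) (φ : SF n) (u d dd : VF n) : ℝ :=
  (hDotNorm s φ + hDotNormv s u + gradHDotNormv s d + hNormv s dd)
  * (gradHNormv s u + hDotNorm s φ + gradHDotNormv s d + hNormv s dd)

/-- the exponential factor Q_c(u)(t) = exp(c ∫₀ᵗ ‖div u‖_{L^∞} dτ) -/
def Qfun (cst : ℝ) (u : TVF n) (t : ℝ) : ℝ :=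
  Real.exp (cst * ∫ τ in (0:ℝ)..t, Linf (diverg (u τ)))

/-- smooth compactly supported space-time test functions -/
def TestFun (ζ : TSF n) : Prop :=
  ContDiff ℝ (⊤ : ℕ∞) (fun p : ℝ × (Fin n → ℝ) => ζ p.1 p.2)
  ∧ HasCompactSupport (fun p : ℝ × (Fin n → ℝ) => ζ p.1 p.2)


section IBPAux

variable {n : ℕ}

lemma pd_contDiff' {f : SF n} (hf : ContDiff ℝ (⊤ : ℕ∞) f) (j : Fin n) : ContDiff ℝ (⊤ : ℕ∞) (pd j f) :=
  (hf.fderiv_right (by simp)).clm_apply contDiff_const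

lemma pd_hasCompactSupport' {f : SF n} (hf : HasCompactSupport f) (j : Fin n) :
    HasCompactSupport (pd j f) := by
  have h := (hf.fderiv ℝ).comp_left
    (g := fun L : (Fin n → ℝ) →L[ℝ] ℝ => L (Pi.single j 1)) rfl
  exact h

lemma integral_pd_eq_zero' {f : SF n} (hf : ContDiff ℝ (⊤ : ℕ∞) f) (hs : HasCompactSupport f)
    (j : Fin n) : ∫ x, pd j f x = 0 := by
  obtain ⟨C, hC⟩ := ContDiff.lipschitzWith_of_hasCompactSupport hs hf (by simp)
  have h := LipschitzWith.integral_lineDeriv_mul_eq (μ := volume)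
    (LipschitzWith.const (α := Fin n → ℝ) (b := (1:ℝ))) hC hs (-(Pi.single j 1))
  have hc : ∀ x : Fin n → ℝ,
      lineDeriv ℝ (fun _ : Fin n → ℝ => (1:ℝ)) x (-(Pi.single j 1)) = 0 := by
    intro x; simp [lineDeriv]
  have heq : ∀ x, lineDeriv ℝ f x (-(-(Pi.single j 1))) = pd j f x := fun x => by
    rw [neg_neg]
    exact ((hf.differentiable (by simp)).differentiableAt).lineDeriv_eq_fderiv
  simp only [hc, heq, zero_mul, integral_zero, mul_one] at h
  exact h.symm

lemma hcs_lam {f g : SF n} (hg : HasCompactSupport g) :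
    HasCompactSupport fun x => f x * g x := hg.mul_left

lemma hcs_lam' {f g : SF n} (hf : HasCompactSupport f) :
    HasCompactSupport fun x => f x * g x := hf.mul_right

lemma hcs_sum {ι : Type*} (s : Finset ι) (f : ι → SF n)
    (h : ∀ i ∈ s, HasCompactSupport (f i)) :
    HasCompactSupport fun x => ∑ i ∈ s, f i x := by
  classical
  induction s using Finset.induction_on with
  | empty => simpa using (HasCompactSupport.intro (K := ∅) isCompact_empty (by simp))
  | insert a s' hni ih =>
    simp only [Finset.sum_insert hni]
    exact (h a (Finset.mem_insert_self a s')).add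
      (ih fun i hi => h i (Finset.mem_insert_of_mem hi))

lemma hcs_sub {f g : SF n} (hf : HasCompactSupport f) (hg : HasCompactSupport g) :
    HasCompactSupport fun x => f x - g x := by
  have hgn : HasCompactSupport fun x => -(g x) :=
    HasCompactSupport.comp_left (g := fun r : ℝ => -r) hg (by simp)
  have h : HasCompactSupport fun x => f x + -(g x) := hf.add hgn
  simpa [sub_eq_add_neg] using h

lemma ibp' {f g : SF n} (hf : ContDiff ℝ (⊤ : ℕ∞) f) (hg : ContDiff ℝ (⊤ : ℕ∞) g)
    (hgs : HasCompactSupport g) (j : Fin n) :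
    ∫ x, pd j f x * g x = - ∫ x, f x * pd j g x := by
  have hfg : ContDiff ℝ (⊤ : ℕ∞) (fun x => f x * g x) := hf.mul hg
  have hfgs : HasCompactSupport (fun x => f x * g x) := hcs_lam hgs
  have h0 : ∫ x, pd j (fun y => f y * g y) x = 0 := integral_pd_eq_zero' hfg hfgs j
  have hpt : ∀ x, pd j (fun y => f y * g y) x = pd j f x * g x + f x * pd j g x := by
    intro x
    show fderiv ℝ (fun y => f y * g y) x (Pi.single j 1) = _
    rw [fderiv_fun_mul ((hf.differentiable (by simp)).differentiableAt)
      ((hg.differentiable (by simp)).differentiableAt)]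
    simp [pd]
    ring
  have hint1 : Integrable (fun x => pd j f x * g x) :=
    ((pd_contDiff' hf j).continuous.mul hg.continuous).integrable_of_hasCompactSupport
      (hcs_lam hgs)
  have hint2 : Integrable (fun x => f x * pd j g x) :=
    (hf.continuous.mul (pd_contDiff' hg j).continuous).integrable_of_hasCompactSupport
      (hcs_lam (pd_hasCompactSupport' hgs j))
  simp only [hpt] at h0
  rw [integral_add hint1 hint2] at h0
  linarith

end IBPAux

set_option maxHeartbeats 4000000 in
/-- Leslie stress dissipation identity (equation (cs2)). -/
theorem leslie_dissipation_identity
    (n : ℕ) (hn : n = 2 ∨ n = 3)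
    (mu1 mu2 mu3 mu5 mu6 lam1 lam2 : ℝ)
    (hl1 : lam1 = mu2 - mu3) (hl1ne : lam1 ≠ 0) (hl2 : lam2 = mu5 - mu6)
    (parodi : mu2 + mu3 = mu6 - mu5)
    (u d dd : VF n)
    (hu : ∀ i, ContDiff ℝ (⊤ : ℕ∞) fun x => u x i) (hd : ∀ i, ContDiff ℝ (⊤ : ℕ∞) fun x => d x i)
    (hdd : ∀ i, ContDiff ℝ (⊤ : ℕ∞) fun x => dd x i)
    (husupp : ∀ i, HasCompactSupport fun x => u x i)
    (hddsupp : ∀ i, HasCompactSupport fun x => dd x i)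
    (hgradd : ∀ i j, HasCompactSupport fun x => Dmat d x i j)
    (hunit : ∀ x, normSq d x = 1) :
    (∫ x, ∑ i, divMat (leslie mu1 mu2 mu3 mu5 mu6 u d dd) x i * u x i)
      + lam1 * L2sqv dd
      + lam1 * ipv dd (mvec (Bmat u) d)
      + lam2 * ipv dd (mvec (Amat u) d)
    = - mu1 * L2sq (quadForm (Amat u) d)
      + lam1 * L2sqv (fun x i =>
          dd x i + mvec (Bmat u) d x i + (lam2 / lam1) * mvec (Amat u) d x i)
      - (mu5 + mu6 + lam2 ^ 2 / lam1) * L2sqv (mvec (Amat u) d) := by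
  classical
  subst hl1; subst hl2
  have h6 : mu6 = mu2 + mu3 + mu5 := by linarith
  subst h6
  -- smoothness facts
  have hDu : ∀ i j : Fin n, ContDiff ℝ (⊤ : ℕ∞) fun x => Dmat u x i j := fun i j =>
    pd_contDiff' (hu i) j
  have hA : ∀ i j : Fin n, ContDiff ℝ (⊤ : ℕ∞) fun x => Amat u x i j := fun i j =>
    ((hDu i j).add (hDu j i)).div_const 2
  have hB : ∀ i j : Fin n, ContDiff ℝ (⊤ : ℕ∞) fun x => Bmat u x i j := fun i j =>
    ((hDu i j).sub (hDu j i)).div_const 2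
  have ha : ∀ i : Fin n, ContDiff ℝ (⊤ : ℕ∞) fun x => mvec (Amat u) d x i := fun i =>
    ContDiff.sum fun j _ => (hA i j).mul (hd j)
  have hb : ∀ i : Fin n, ContDiff ℝ (⊤ : ℕ∞) fun x => mvec (Bmat u) d x i := fun i =>
    ContDiff.sum fun j _ => (hB i j).mul (hd j)
  have hq : ContDiff ℝ (⊤ : ℕ∞) (quadForm (Amat u) d) :=
    ContDiff.sum fun i _ => ContDiff.sum fun j _ => ((hd i).mul (hA i j)).mul (hd j)
  have hS : ∀ i j : Fin n,
      ContDiff ℝ (⊤ : ℕ∞) fun x => leslie mu1 mu2 mu3 mu5 (mu2 + mu3 + mu5) u d dd x i j := by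
    intro i j
    show ContDiff ℝ (⊤ : ℕ∞) fun x =>
      mu1 * quadForm (Amat u) d x * d x i * d x j
      + mu2 * d x i * (dd x j + mvec (Bmat u) d x j)
      + mu3 * d x j * (dd x i + mvec (Bmat u) d x i)
      + mu5 * d x i * mvec (Amat u) d x j
      + (mu2 + mu3 + mu5) * d x j * mvec (Amat u) d x i
    exact ((((((contDiff_const.mul hq).mul (hd i)).mul (hd j)).add
      ((contDiff_const.mul (hd i)).mul ((hdd j).add (hb j)))).add
      ((contDiff_const.mul (hd j)).mul ((hdd i).add (hb i)))).add
      ((contDiff_const.mul (hd i)).mul (ha j))).add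
      ((contDiff_const.mul (hd j)).mul (ha i))
  -- compact support facts
  have hDus : ∀ i j : Fin n, HasCompactSupport fun x => Dmat u x i j := fun i j =>
    pd_hasCompactSupport' (husupp i) j
  have hAs : ∀ i j : Fin n, HasCompactSupport fun x => Amat u x i j := fun i j =>
    HasCompactSupport.comp_left (g := fun r : ℝ => r / 2)
      ((hDus i j).add (hDus j i)) (by simp)
  have hBs : ∀ i j : Fin n, HasCompactSupport fun x => Bmat u x i j := fun i j =>
    HasCompactSupport.comp_left (g := fun r : ℝ => r / 2)
      (hcs_sub (hDus i j) (hDus j i)) (by simp)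
  have has : ∀ i : Fin n, HasCompactSupport fun x => mvec (Amat u) d x i := fun i =>
    hcs_sum Finset.univ (fun j x => Amat u x i j * d x j) (fun j _ => hcs_lam' (hAs i j))
  have hbs : ∀ i : Fin n, HasCompactSupport fun x => mvec (Bmat u) d x i := fun i =>
    hcs_sum Finset.univ (fun j x => Bmat u x i j * d x j) (fun j _ => hcs_lam' (hBs i j))
  have hqs : HasCompactSupport (quadForm (Amat u) d) :=
    hcs_sum Finset.univ (fun i x => ∑ j, d x i * Amat u x i j * d x j)
      (fun i _ => hcs_sum Finset.univ (fun j x => d x i * Amat u x i j * d x j)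
        (fun j _ => hcs_lam' (hcs_lam (hAs i j))))
  -- integrability of the elementary integrands
  have hintSu : ∀ i j : Fin n, Integrable (fun x =>
      pd j (fun y => leslie mu1 mu2 mu3 mu5 (mu2 + mu3 + mu5) u d dd y i j) x * u x i)
      volume := fun i j =>
    ((pd_contDiff' (hS i j) j).continuous.mul
      (hu i).continuous).integrable_of_hasCompactSupport (hcs_lam (husupp i))
  have hintSD : ∀ i j : Fin n, Integrable (fun x =>
      leslie mu1 mu2 mu3 mu5 (mu2 + mu3 + mu5) u d dd x i j * pd j (fun y => u y i) x)
      volume := fun i j =>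
    ((hS i j).continuous.mul
      (pd_contDiff' (hu i) j).continuous).integrable_of_hasCompactSupport
      (hcs_lam (pd_hasCompactSupport' (husupp i) j))
  -- integration by parts
  have hkey : (∫ x, ∑ i, divMat (leslie mu1 mu2 mu3 mu5 (mu2 + mu3 + mu5) u d dd) x i * u x i)
      = - ∫ x, ∑ i, ∑ j, leslie mu1 mu2 mu3 mu5 (mu2 + mu3 + mu5) u d dd x i j
          * pd j (fun y => u y i) x := by
    have e0 : ∀ x : Fin n → ℝ,
        (∑ i, divMat (leslie mu1 mu2 mu3 mu5 (mu2 + mu3 + mu5) u d dd) x i * u x i)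
        = ∑ i, ∑ j, pd j (fun y => leslie mu1 mu2 mu3 mu5 (mu2 + mu3 + mu5) u d dd y i j) x
            * u x i := by
      intro x
      refine Finset.sum_congr rfl fun i _ => ?_
      show (∑ j, pd j (fun y => leslie mu1 mu2 mu3 mu5 (mu2 + mu3 + mu5) u d dd y i j) x)
          * u x i = _
      rw [Finset.sum_mul]
    have e1 : (∫ x, ∑ i, divMat (leslie mu1 mu2 mu3 mu5 (mu2 + mu3 + mu5) u d dd) x i * u x i)
        = ∑ i : Fin n, ∑ j : Fin n, ∫ x,
            pd j (fun y => leslie mu1 mu2 mu3 mu5 (mu2 + mu3 + mu5) u d dd y i j) x * u x i := by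
      simp only [e0]
      rw [integral_finset_sum _ (fun i _ => integrable_finset_sum _ fun j _ => hintSu i j)]
      exact Finset.sum_congr rfl fun i _ => integral_finset_sum _ fun j _ => hintSu i j
    have e3 : (∫ x, ∑ i, ∑ j, leslie mu1 mu2 mu3 mu5 (mu2 + mu3 + mu5) u d dd x i j
          * pd j (fun y => u y i) x)
        = ∑ i : Fin n, ∑ j : Fin n, ∫ x,
            leslie mu1 mu2 mu3 mu5 (mu2 + mu3 + mu5) u d dd x i j * pd j (fun y => u y i) x := by
      rw [integral_finset_sum _ (fun i _ => integrable_finset_sum _ fun j _ => hintSD i j)]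
      exact Finset.sum_congr rfl fun i _ => integral_finset_sum _ fun j _ => hintSD i j
    rw [e1, e3, ← Finset.sum_neg_distrib]
    refine Finset.sum_congr rfl fun i _ => ?_
    rw [← Finset.sum_neg_distrib]
    exact Finset.sum_congr rfl fun j _ => ibp' (hS i j) (hu i) (husupp i) j
  rw [hkey]
  simp only [L2sqv, ipv, L2sq]
  -- integrability of the combined integrands
  have hXi : Integrable (fun x => ∑ i, ∑ j,
      leslie mu1 mu2 mu3 mu5 (mu2 + mu3 + mu5) u d dd x i j * pd j (fun y => u y i) x)
      volume :=
    integrable_finset_sum _ fun i _ => integrable_finset_sum _ fun j _ => hintSD i j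
  have hY1i : Integrable (fun x => ∑ i, dd x i ^ 2) volume :=
    integrable_finset_sum _ fun i _ =>
      ((hdd i).continuous.pow 2).integrable_of_hasCompactSupport
        (by simpa only [Function.comp_def, Pi.pow_def] using
          HasCompactSupport.comp_left (g := fun r : ℝ => r ^ 2) (hddsupp i) (by simp))
  have hY2i : Integrable (fun x => ∑ i, dd x i * mvec (Bmat u) d x i) volume :=
    integrable_finset_sum _ fun i _ =>
      ((hdd i).continuous.mul (hb i).continuous).integrable_of_hasCompactSupport
        (hcs_lam' (hddsupp i))
  have hY3i : Integrable (fun x => ∑ i, dd x i * mvec (Amat u) d x i) volume :=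
    integrable_finset_sum _ fun i _ =>
      ((hdd i).continuous.mul (ha i).continuous).integrable_of_hasCompactSupport
        (hcs_lam' (hddsupp i))
  have hPi : Integrable (fun x => quadForm (Amat u) d x ^ 2) volume :=
    (hq.continuous.pow 2).integrable_of_hasCompactSupport
      (by simpa only [Function.comp_def, Pi.pow_def] using
          HasCompactSupport.comp_left (g := fun r : ℝ => r ^ 2) hqs (by simp))
  have hQsupp : ∀ i : Fin n, HasCompactSupport (fun x => dd x i + mvec (Bmat u) d x i
      + (mu5 - (mu2 + mu3 + mu5)) / (mu2 - mu3) * mvec (Amat u) d x i) := fun i =>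
    ((hddsupp i).add (hbs i)).add (hcs_lam (has i))
  have hQi : Integrable (fun x => ∑ i, (dd x i + mvec (Bmat u) d x i
      + (mu5 - (mu2 + mu3 + mu5)) / (mu2 - mu3) * mvec (Amat u) d x i) ^ 2) volume :=
    integrable_finset_sum _ fun i _ =>
      ((((hdd i).continuous.add (hb i).continuous).add
        (continuous_const.mul (ha i).continuous)).pow 2).integrable_of_hasCompactSupport
        (by simpa only [Function.comp_def, Pi.pow_def, Pi.add_def, Pi.mul_def] using
          HasCompactSupport.comp_left (g := fun r : ℝ => r ^ 2) (hQsupp i) (by simp))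
  have hRi : Integrable (fun x => ∑ i, mvec (Amat u) d x i ^ 2) volume :=
    integrable_finset_sum _ fun i _ =>
      ((ha i).continuous.pow 2).integrable_of_hasCompactSupport
        (by simpa only [Function.comp_def, Pi.pow_def] using
          HasCompactSupport.comp_left (g := fun r : ℝ => r ^ 2) (has i) (by simp))
  -- pull all scalars and signs inside the integrals
  simp_rw [← integral_const_mul, ← integral_neg]
  -- combine into a single integral on each side
  have hL1 : Integrable (fun x => -(∑ i, ∑ j,
      leslie mu1 mu2 mu3 mu5 (mu2 + mu3 + mu5) u d dd x i j * pd j (fun y => u y i) x))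
      volume := hXi.neg
  have hL2 : Integrable (fun x => (mu2 - mu3) * ∑ i, dd x i ^ 2) volume :=
    hY1i.const_mul _
  have hL3 : Integrable (fun x => (mu2 - mu3) * ∑ i, dd x i * mvec (Bmat u) d x i) volume :=
    hY2i.const_mul _
  have hL4 : Integrable (fun x =>
      (mu5 - (mu2 + mu3 + mu5)) * ∑ i, dd x i * mvec (Amat u) d x i) volume :=
    hY3i.const_mul _
  have hL12 : Integrable (fun x => -(∑ i, ∑ j,
      leslie mu1 mu2 mu3 mu5 (mu2 + mu3 + mu5) u d dd x i j * pd j (fun y => u y i) x)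
      + (mu2 - mu3) * ∑ i, dd x i ^ 2) volume := hL1.add hL2
  have hL123 : Integrable (fun x => (-(∑ i, ∑ j,
      leslie mu1 mu2 mu3 mu5 (mu2 + mu3 + mu5) u d dd x i j * pd j (fun y => u y i) x)
      + (mu2 - mu3) * ∑ i, dd x i ^ 2)
      + (mu2 - mu3) * ∑ i, dd x i * mvec (Bmat u) d x i) volume := hL12.add hL3
  have hR1 : Integrable (fun x => -mu1 * quadForm (Amat u) d x ^ 2) volume :=
    hPi.const_mul _
  have hR2 : Integrable (fun x => (mu2 - mu3) * ∑ i, (dd x i + mvec (Bmat u) d x i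
      + (mu5 - (mu2 + mu3 + mu5)) / (mu2 - mu3) * mvec (Amat u) d x i) ^ 2) volume :=
    hQi.const_mul _
  have hR3 : Integrable (fun x =>
      (mu5 + (mu2 + mu3 + mu5) + (mu5 - (mu2 + mu3 + mu5)) ^ 2 / (mu2 - mu3))
      * ∑ i, mvec (Amat u) d x i ^ 2) volume := hRi.const_mul _
  have hR12 : Integrable (fun x => -mu1 * quadForm (Amat u) d x ^ 2
      + (mu2 - mu3) * ∑ i, (dd x i + mvec (Bmat u) d x i
      + (mu5 - (mu2 + mu3 + mu5)) / (mu2 - mu3) * mvec (Amat u) d x i) ^ 2) volume :=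
    hR1.add hR2
  rw [← integral_add hL1 hL2, ← integral_add hL12 hL3, ← integral_add hL123 hL4,
    ← integral_add hR1 hR2, ← integral_sub hR12 hR3]
  -- reduce to a pointwise polynomial identity
  refine integral_congr_ae (Filter.Eventually.of_forall fun x => ?_)
  rcases hn with rfl | rfl <;>
  · simp only [leslie, quadForm, mvec, Amat, Bmat, Dmat,
      Fin.sum_univ_two, Fin.sum_univ_three]
    field_simp
    ring


end EL
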